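/- arXiv:2001.00415 — 2 statements merged into one kernel-verified Lean document; each statement's English description precedes it below -/
import Mathlib

section
/- If D is a Steiner system S(t, k, v) with t < k and block set B, then the P-position set of the game Γ[Q*_B], the subgraph of Welter's game Γ_{v,k} induced on Q*_B = B ∪ ⋃_{B'∈B} N⁻(B'), equals B. -/
/-- The P-positions of a digraph `Γ` (given as an edge relation) whose reversed edge
relation is well-founded (i.e. a game graph), defined by well-founded recursion:
a vertex is a P-position iff none of its out-neighbors is a P-position. -/
def pposAux {V : Type*} (Γ : V → V → Prop) (hwf : WellFounded fun a b => Γ b a) : V → Prop :=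
  hwf.fix fun v ih => ∀ y, ∀ h : Γ v y, ¬ ih y h

/-- The P-position set of a game graph. -/
def pposSet {V : Type*} (Γ : V → V → Prop) (hwf : WellFounded fun a b => Γ b a) : Set V :=
  {v | pposAux Γ hwf v}

/-- The edge relation of the subgraph of `Γ` induced on the vertex set `Q`. -/
def inducedRel {V : Type*} (Γ : V → V → Prop) (Q : Set V) : V → V → Prop :=
  fun a b => a ∈ Q ∧ b ∈ Q ∧ Γ a b

theorem inducedRel_wf {V : Type*} {Γ : V → V → Prop} (Q : Set V)
    (hwf : WellFounded fun a b => Γ b a) :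
    WellFounded fun a b => inducedRel Γ Q b a :=
  Subrelation.wf (fun h => h.2.2) hwf

/-- The P-position set of the subgraph of `Γ` induced on `Q`. -/
def pposSetOn {V : Type*} (Γ : V → V → Prop) (Q : Set V)
    (hwf : WellFounded fun a b => Γ b a) : Set V :=
  {v | v ∈ Q ∧ pposAux (inducedRel Γ Q) (inducedRel_wf Q hwf) v}

/-- `Q* = B ∪ ⋃_{b ∈ B} N⁻(b)`: the union of `B` with all in-neighbors of elements of `B`. -/
def qstar {V : Type*} (Γ : V → V → Prop) (B : Set V) : Set V :=
  B ∪ {v | ∃ b ∈ B, Γ v b}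

/-- The edge relation of Welter's game: there is an edge from `P` to `P^{(p q)}`
whenever `p ∈ P`, `q ∉ P`, `q < p`. -/
def welterEdge (P Q : Finset ℕ) : Prop :=
  ∃ p ∈ P, ∃ q, q ∉ P ∧ q < p ∧ Q = insert q (P.erase p)

/-- The vertex set of Welter's game `Γ_{v,k}`: the `k`-element subsets of `{0, ..., v-1}`. -/
def welterVertex (v k : ℕ) : Set (Finset ℕ) :=
  {P | P ⊆ Finset.range v ∧ P.card = k}

/-- The edge relation of Welter's game `Γ_{v,k}`. -/
def welterRel (v k : ℕ) : Finset ℕ → Finset ℕ → Prop :=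
  fun P Q => P ∈ welterVertex v k ∧ Q ∈ welterVertex v k ∧ welterEdge P Q

theorem welterEdge_sum_lt {P Q : Finset ℕ} (h : welterEdge P Q) : Q.sum id < P.sum id := by
  obtain ⟨p, hp, q, hq, hqp, rfl⟩ := h
  have hqe : q ∉ P.erase p := fun hc => hq (Finset.mem_of_mem_erase hc)
  rw [Finset.sum_insert hqe, ← Finset.add_sum_erase P id hp]
  exact Nat.add_lt_add_right hqp _

theorem welter_wf : WellFounded (fun a b : Finset ℕ => welterEdge b a) :=
  Subrelation.wf (fun h => welterEdge_sum_lt h)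
    (InvImage.wf (fun s : Finset ℕ => s.sum id) Nat.lt_wfRel.wf)

theorem welterRel_wf (v k : ℕ) : WellFounded (fun a b => welterRel v k b a) :=
  Subrelation.wf (fun h => h.2.2) welter_wf

/-- A `t`-`(v, k, lam)` design with point set `{0, ..., v-1}` and block set `𝔅`:
every block is a `k`-subset of `{0, ..., v-1}` and every `t`-subset of `{0, ..., v-1}`
is contained in exactly `lam` blocks. -/
def IsDesign (v t k lam : ℕ) (𝔅 : Finset (Finset ℕ)) : Prop :=
  (∀ b ∈ 𝔅, b ⊆ Finset.range v ∧ b.card = k) ∧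
  ∀ T : Finset ℕ, T ⊆ Finset.range v → T.card = t →
    (𝔅.filter fun b => T ⊆ b).card = lam

/-- A Steiner system `S(t, k, v)` with point set `{0, ..., v-1}`. -/
def IsSteiner (v t k : ℕ) (𝔅 : Finset (Finset ℕ)) : Prop :=
  IsDesign v t k 1 𝔅

/-- `Q*(D) = 𝔅 ∪ ⋃_{B ∈ 𝔅} N⁻(B)` in Welter's game `Γ_{v,k}`. -/
def qstarW (v k : ℕ) (𝔅 : Finset (Finset ℕ)) : Set (Finset ℕ) :=
  (↑𝔅 : Set (Finset ℕ)) ∪ {P | ∃ b ∈ 𝔅, welterRel v k P b}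

theorem pposAux_iff {V : Type*} (Γ : V → V → Prop) (hwf : WellFounded fun a b => Γ b a)
    (v : V) : pposAux Γ hwf v ↔ ∀ y, Γ v y → ¬ pposAux Γ hwf y := by
  unfold pposAux
  rw [hwf.fix_eq]

theorem no_block_edge {v t k : ℕ} {𝔅 : Finset (Finset ℕ)}
    (h : IsSteiner v t k 𝔅) (htk : t < k) {b b' : Finset ℕ}
    (hb : b ∈ 𝔅) (hb' : b' ∈ 𝔅) (he : welterEdge b b') : False := by
  obtain ⟨p, hp, q, hq, hqp, rfl⟩ := he
  have hbk := (h.1 b hb).2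
  have ht : t ≤ (b.erase p).card := by
    rw [Finset.card_erase_of_mem hp, hbk]; omega
  obtain ⟨T, hT, hTcard⟩ := Finset.exists_subset_card_eq ht
  have hTb : T ⊆ b := hT.trans (Finset.erase_subset _ _)
  have hTb' : T ⊆ insert q (b.erase p) := hT.trans (Finset.subset_insert _ _)
  have hTr : T ⊆ Finset.range v := hTb.trans (h.1 b hb).1
  have hcard := h.2 T hTr hTcard
  have hne : b ≠ insert q (b.erase p) := by
    intro hceq
    exact hq (hceq ▸ Finset.mem_insert_self q _)
  have h2 : 1 < (𝔅.filter fun B => T ⊆ B).card := by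
    apply Finset.one_lt_card.2
    exact ⟨b, Finset.mem_filter.2 ⟨hb, hTb⟩, _, Finset.mem_filter.2 ⟨hb', hTb'⟩, hne⟩
  omega

/-- For a Steiner system `S(t, k, v)` with `t < k` and block set `𝔅`, the P-position
set of the subgraph of Welter's game `Γ_{v,k}` induced on
`Q* = 𝔅 ∪ ⋃_{B ∈ 𝔅} N⁻(B)` equals `𝔅`. -/
theorem stmt_5 (v t k : ℕ) (𝔅 : Finset (Finset ℕ))
    (h : IsSteiner v t k 𝔅) (htk : t < k) :
    pposSetOn (welterRel v k) (qstarW v k 𝔅) (welterRel_wf v k) = (↑𝔅 : Set (Finset ℕ)) := by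
  set Γ := welterRel v k
  set Q := qstarW v k 𝔅
  set hwf := welterRel_wf v k
  have key : ∀ P : Finset ℕ, P ∈ Q →
      (pposAux (inducedRel Γ Q) (inducedRel_wf Q hwf) P ↔ P ∈ 𝔅) := by
    intro P
    induction P using (welterRel_wf v k).induction with
    | _ P IH =>
      intro hPQ
      constructor
      · intro hppos
        by_contra hPB
        obtain ⟨b, hb, hPb⟩ : ∃ b ∈ 𝔅, Γ P b := by
          rcases hPQ with hPQ | hPQ
          · exact absurd hPQ hPB
          · exact hPQ
        have hbQ : b ∈ Q := Or.inl hb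
        have hbppos : pposAux (inducedRel Γ Q) (inducedRel_wf Q hwf) b :=
          (IH b hPb hbQ).2 hb
        exact (pposAux_iff _ _ P).1 hppos b ⟨hPQ, hbQ, hPb⟩ hbppos
      · intro hPB
        rw [pposAux_iff]
        rintro y ⟨-, hyQ, hPy⟩ hyp
        have hyB : y ∈ 𝔅 := (IH y hPy hyQ).1 hyp
        exact no_block_edge h htk hPB hyB hPy.2.2
  ext P
  constructor
  · rintro ⟨hPQ, hp⟩
    exact (key P hPQ).1 hp
  · intro hPB
    have hPQ : P ∈ Q := Or.inl hPB
    exact ⟨hPQ, (key P hPQ).2 hPB⟩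
end

section
/- Let D be a Steiner triple system S(2,3,v) with block set B. Then a₀(D) + a₃(D) = Σ_{{B,C} ∈ C(B,2)} I(B,C) − v(v−1)(v−3)/12, where I(B,C) = |N⁻(B) ∩ N⁻(C)| in Welter's game Γ_{v,3} and a_i(D) is the number of 3-subsets P of [v] that are non-blocks with exactly i out-neighbors among the blocks. -/
/-- `a_i(D)`: the number of `k`-subsets of `{0, ..., v-1}` that are not blocks and have
exactly `i` out-neighbors among the blocks in Welter's game `Γ_{v,k}`. -/
noncomputable def aCount (v k : ℕ) (𝔅 : Finset (Finset ℕ)) (i : ℕ) : ℕ :=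
  Set.ncard {P | P ∈ welterVertex v k ∧ P ∉ 𝔅 ∧
    Set.ncard {b | b ∈ 𝔅 ∧ welterRel v k P b} = i}

/-- `I(B, C) = |N⁻(B) ∩ N⁻(C)|` in Welter's game `Γ_{v,3}`. -/
noncomputable def ICount (v : ℕ) (B C : Finset ℕ) : ℕ :=
  Set.ncard {P | welterRel v 3 P B ∧ welterRel v 3 P C}

/-!
Let `d(P)` count the blocks among the out-neighbours of a triple `P`. A block has `d = 0` and a
non-block has `d ≤ 3`, since an out-neighbour block `b` is determined by the pair `P ∩ b`; on
`{0, 1, 2, 3}` the indicator of `{0, 3}` is `(d - 1)(d - 2) / 2`. Hence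
`12 (a₀ + a₃) = 6 Σ d (d - 1) - 12 Σ d + 12 N`, summed over the `N` non-blocks. Here
`Σ d (d - 1)` counts ordered pairs of distinct blocks with a common in-neighbour, i.e. it is
`Σ I(B, C)`; the in-neighbours of a block `b` are the triples `b - q + p` with `q ∈ b ∌ p`,
`q < p`, and each pair `q < p` has `(v - 3) / 2` blocks through `q` avoiding `p`, so
`Σ d = C(v, 2) (v - 3) / 2`; finally
`N = C(v, 3) - v (v - 1) / 6 = v (v - 1) (v - 3) / 6`.
-/

open Finset
open scoped Classical

theorem two_mul_cast_choose_two (n : ℕ) : 2 * (n.choose 2 : ℤ) = n * (n - 1) := by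
  rw [← Nat.cast_descFactorial_two, Nat.descFactorial_eq_factorial_mul_choose]
  push_cast [Nat.factorial_two]
  ring

theorem six_mul_cast_choose_three (n : ℕ) : 6 * (n.choose 3 : ℤ) = n * (n - 1) * (n - 2) := by
  obtain hn | hn := lt_or_ge n 3
  · interval_cases n <;> rfl
  · rw [show (6 : ℤ) = ((3 : ℕ).factorial : ℕ) by rfl, ← Nat.cast_mul,
      ← Nat.descFactorial_eq_factorial_mul_choose, Nat.descFactorial_succ, Nat.descFactorial_succ, Nat.descFactorial_succ,
      Nat.descFactorial_zero]
    push_cast [Nat.sub_zero, Nat.cast_sub (by omega : 2 ≤ n), Nat.cast_sub (by omega : 1 ≤ n)]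
    ring

theorem insert_erase_insert_erase {α : Type*} [DecidableEq α] {s : Finset α} {a b : α}
    (ha : a ∈ s) (hb : b ∉ s) : insert a ((insert b (s.erase a)).erase b) = s := by
  rw [erase_insert fun h => hb (mem_of_mem_erase h), insert_erase ha]

theorem sum_card_offDiag_filter {α β : Type*} (s : Finset α) (t : Finset β) (r : α → β → Prop) :
    ∑ z ∈ t.offDiag, #{a ∈ s | r a z.1 ∧ r a z.2} = ∑ a ∈ s, #({b ∈ t | r a b}.offDiag) := by
  calc _ = ∑ a ∈ s, #{z ∈ t.offDiag | r a z.1 ∧ r a z.2} :=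
        (sum_card_bipartiteAbove_eq_sum_card_bipartiteBelow _).symm
    _ = _ := sum_congr rfl fun a _ => by
        congr 1
        ext z
        simp only [mem_offDiag, mem_filter]
        tauto

namespace IsDesign

variable {v t k lam : ℕ} {𝔅 : Finset (Finset ℕ)}

theorem mem_powersetCard_range (h : IsDesign v t k lam 𝔅) {b : Finset ℕ} (hb : b ∈ 𝔅) :
    b ∈ (range v).powersetCard k :=
  mem_powersetCard.2 (h.1 b hb)

theorem card_mul_choose (h : IsDesign v t k lam 𝔅) : #𝔅 * k.choose t = v.choose t * lam := by
  rw [← card_range v, ← card_powersetCard]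
  refine card_mul_eq_card_mul (fun b T => T ⊆ b) (fun b hb => ?_) (fun T hT => ?_)
  · obtain ⟨hbv, hbk⟩ := h.1 b hb
    have : ((range v).powersetCard t).bipartiteAbove (fun b T => T ⊆ b) b = b.powersetCard t := by
      ext T
      simp only [mem_bipartiteAbove, mem_powersetCard]
      exact ⟨fun ⟨⟨_, hT⟩, hTb⟩ => ⟨hTb, hT⟩, fun ⟨hTb, hT⟩ => ⟨⟨hTb.trans hbv, hT⟩, hTb⟩⟩
    rw [this, card_powersetCard, hbk]
  · exact h.2 T (mem_powersetCard.1 hT).1 (mem_powersetCard.1 hT).2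

theorem card_filter_mem_mul (h : IsDesign v 2 k lam 𝔅) {x : ℕ} (hx : x < v) :
    #{b ∈ 𝔅 | x ∈ b} * (k - 1) = (v - 1) * lam := by
  have hxv : x ∈ range v := mem_range.2 hx
  rw [← card_range v, ← card_erase_of_mem hxv]
  refine card_mul_eq_card_mul (fun b y => y ∈ b) (fun b hb => ?_) (fun y hy => ?_)
  · obtain ⟨hb, hxb⟩ := mem_filter.1 hb
    obtain ⟨hbv, hbk⟩ := h.1 b hb
    have : ((range v).erase x).bipartiteAbove (fun b y => y ∈ b) b = b.erase x := by
      ext y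
      simp only [mem_bipartiteAbove, mem_erase]
      exact ⟨fun ⟨⟨hyx, _⟩, hyb⟩ => ⟨hyx, hyb⟩, fun ⟨hyx, hyb⟩ => ⟨⟨hyx, hbv hyb⟩, hyb⟩⟩
    rw [this, card_erase_of_mem hxb, hbk]
  · obtain ⟨hyx, hyv⟩ := mem_erase.1 hy
    have : {b ∈ 𝔅 | x ∈ b}.bipartiteBelow (fun b y => y ∈ b) y = {b ∈ 𝔅 | {x, y} ⊆ b} := by
      ext b
      simp [mem_bipartiteBelow, insert_subset_iff, and_assoc]
    rw [this]
    refine h.2 _ (insert_subset hxv (singleton_subset_iff.2 hyv)) ?_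
    rw [card_insert_of_notMem (by simpa using hyx.symm), card_singleton]

end IsDesign

namespace IsSteiner

variable {v t : ℕ} {𝔅 : Finset (Finset ℕ)}

theorem eq_of_subset {k : ℕ} (h : IsSteiner v t k 𝔅) {T b c : Finset ℕ} (hT : T ⊆ range v)
    (hTt : #T = t) (hb : b ∈ 𝔅) (hc : c ∈ 𝔅) (hTb : T ⊆ b) (hTc : T ⊆ c) : b = c :=
  card_le_one.1 (h.2 T hT hTt).le b (mem_filter.2 ⟨hb, hTb⟩) c (mem_filter.2 ⟨hc, hTc⟩)

theorem six_mul_card (h : IsSteiner v 2 3 𝔅) : 6 * (#𝔅 : ℤ) = v * (v - 1) := by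
  have : #𝔅 * 3 = v.choose 2 := by simpa using IsDesign.card_mul_choose h
  rw [← two_mul_cast_choose_two, ← this]
  push_cast
  ring

theorem two_mul_card_filter_mem_notMem (h : IsSteiner v 2 3 𝔅) {x y : ℕ} (hxy : x ≠ y)
    (hx : x < v) (hy : y < v) : 2 * (#{b ∈ 𝔅 | x ∈ b ∧ y ∉ b} : ℤ) = v - 3 := by
  have hpair : #{b ∈ 𝔅 | x ∈ b ∧ y ∈ b} = 1 := by
    rw [← h.2 {x, y} (by simp [insert_subset_iff, hx, hy]) (card_pair hxy)]
    simp [insert_subset_iff]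
  have hsplit := card_filter_add_card_filter_not (s := {b ∈ 𝔅 | x ∈ b}) (fun b => y ∈ b)
  simp only [filter_filter] at hsplit
  have hrep := IsDesign.card_filter_mem_mul h hx
  omega

end IsSteiner

theorem welterEdge.inter_eq_erase {P Q : Finset ℕ} (h : welterEdge P Q) :
    ∃ p ∈ P, P ∩ Q = P.erase p := by
  obtain ⟨p, hp, q, hq, -, rfl⟩ := h
  refine ⟨p, hp, ?_⟩
  ext x
  simp only [mem_inter, mem_insert, mem_erase]
  constructor
  · rintro ⟨hx, rfl | hx'⟩
    · exact absurd hx hq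
    · exact hx'
  · exact fun hx => ⟨hx.2, Or.inr hx⟩

def ascPairs (v : ℕ) : Finset (ℕ × ℕ) :=
  {z ∈ range v ×ˢ range v | z.1 < z.2}

theorem mem_ascPairs {v : ℕ} {z : ℕ × ℕ} : z ∈ ascPairs v ↔ z.1 < z.2 ∧ z.2 < v := by
  simp only [ascPairs, mem_filter, mem_product, mem_range]
  omega

theorem two_mul_card_ascPairs (v : ℕ) : 2 * (#(ascPairs v) : ℤ) = v * (v - 1) := by
  rw [ascPairs, card_product_filter_lt, card_range, two_mul_cast_choose_two]

/-- The in-neighbours of `b` in Welter's game are the sets `insert p (b.erase q)` with `q ∈ b`,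
`p ∉ b`, `q < p`. -/
theorem card_filter_welterRel_eq {v k : ℕ} {b : Finset ℕ}
    (hb : b ∈ (range v).powersetCard k) :
    #{P ∈ (range v).powersetCard k | welterRel v k P b}
      = #{z ∈ ascPairs v | z.1 ∈ b ∧ z.2 ∉ b} := by
  obtain ⟨hbv, hbk⟩ := mem_powersetCard.1 hb
  symm
  refine card_nbij (fun z => insert z.2 (b.erase z.1)) ?_ ?_ ?_
  · rintro ⟨q, p⟩ hz
    obtain ⟨hz, hqb, hpb⟩ := mem_filter.1 hz
    obtain ⟨hqp, hp⟩ := mem_ascPairs.1 hz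
    have hpe : p ∉ b.erase q := fun h => hpb (mem_of_mem_erase h)
    have hP : insert p (b.erase q) ⊆ range v ∧ #(insert p (b.erase q)) = k := by
      refine ⟨insert_subset (mem_range.2 hp) ((erase_subset q b).trans hbv), ?_⟩
      rw [card_insert_of_notMem hpe, card_erase_of_mem hqb, hbk]
      exact Nat.sub_add_cancel (hbk ▸ card_pos.2 ⟨q, hqb⟩)
    refine mem_filter.2 ⟨mem_powersetCard.2 hP, hP, ⟨hbv, hbk⟩, p, mem_insert_self p _, q, ?_,
      hqp, (insert_erase_insert_erase hqb hpb).symm⟩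
    simp [hqp.ne]
  · rintro ⟨q, p⟩ hz ⟨q', p'⟩ hz' heq
    obtain ⟨hqb, hpb⟩ : q ∈ b ∧ p ∉ b := (mem_filter.1 hz).2
    have hq'b : q' ∈ b := (mem_filter.1 hz').2.1
    simp only at heq
    have hpp' : p = p' := by
      have : p ∈ insert p' (b.erase q') := heq ▸ mem_insert_self p _
      exact (mem_insert.1 this).resolve_right fun h => hpb (mem_of_mem_erase h)
    subst hpp'
    have := congrArg (·.erase p) heq
    simp only [erase_insert fun h => hpb (mem_of_mem_erase h)] at this
    rw [erase_injOn b hqb hq'b this]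
  · rintro P hP
    obtain ⟨hPv, -, p, hp, q, hq, hqp, rfl⟩ := (mem_filter.1 hP).2
    refine ⟨(q, p), mem_filter.2 ⟨mem_ascPairs.2 ⟨hqp, mem_range.1 (hPv.1 hp)⟩,
      mem_insert_self q _, by simp [hqp.ne']⟩, insert_erase_insert_erase hp hq⟩

noncomputable def blockOutDegree (v k : ℕ) (𝔅 : Finset (Finset ℕ)) (P : Finset ℕ) : ℕ :=
  #{b ∈ 𝔅 | welterRel v k P b}

theorem sum_blockOutDegree {v k : ℕ} {𝔅 : Finset (Finset ℕ)}
    (h𝔅 : ∀ b ∈ 𝔅, b ∈ (range v).powersetCard k) :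
    ∑ P ∈ (range v).powersetCard k, blockOutDegree v k 𝔅 P
      = ∑ z ∈ ascPairs v, #{b ∈ 𝔅 | z.1 ∈ b ∧ z.2 ∉ b} :=
  calc _ = ∑ b ∈ 𝔅, #{P ∈ (range v).powersetCard k | welterRel v k P b} :=
        sum_card_bipartiteAbove_eq_sum_card_bipartiteBelow _
    _ = ∑ b ∈ 𝔅, #{z ∈ ascPairs v | z.1 ∈ b ∧ z.2 ∉ b} :=
        sum_congr rfl fun b hb => card_filter_welterRel_eq (h𝔅 b hb)
    _ = _ := sum_card_bipartiteAbove_eq_sum_card_bipartiteBelow _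

namespace IsSteiner

variable {v t : ℕ} {𝔅 : Finset (Finset ℕ)}

/-- A block `b` and an out-neighbour `c` share the `t`-set `b ∩ c`, which lies in a unique block. -/
theorem blockOutDegree_eq_zero (h : IsSteiner v t (t + 1) 𝔅) {b : Finset ℕ} (hb : b ∈ 𝔅) :
    blockOutDegree v (t + 1) 𝔅 b = 0 := by
  rw [blockOutDegree, card_eq_zero, filter_eq_empty_iff]
  rintro c hc ⟨⟨hbv, hbt⟩, -, hbc⟩
  obtain ⟨p, hp, hinter⟩ := hbc.inter_eq_erase
  have hbc : b = c := h.eq_of_subset (inter_subset_left.trans hbv)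
    (by rw [hinter, card_erase_of_mem hp, hbt, Nat.add_sub_cancel]) hb hc
    inter_subset_left inter_subset_right
  rw [hbc, inter_self] at hinter
  exact notMem_erase p c (hinter ▸ hbc ▸ hp)

theorem blockOutDegree_le (h : IsSteiner v t (t + 1) 𝔅) {P : Finset ℕ}
    (hP : P ∈ (range v).powersetCard (t + 1)) : blockOutDegree v (t + 1) 𝔅 P ≤ t + 1 := by
  obtain ⟨hPv, hPt⟩ := mem_powersetCard.1 hP
  have hcard : ∀ b ∈ {b ∈ 𝔅 | welterRel v (t + 1) P b}, #(P ∩ b) = t := by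
    intro b hb
    obtain ⟨p, hp, hinter⟩ := (mem_filter.1 hb).2.2.2.inter_eq_erase
    rw [hinter, card_erase_of_mem hp, hPt, Nat.add_sub_cancel]
  calc blockOutDegree v (t + 1) 𝔅 P ≤ #(P.powersetCard t) := by
        refine card_le_card_of_injOn (P ∩ ·) (fun b hb => ?_) fun b hb c hc hbc => ?_
        · exact mem_powersetCard.2 ⟨inter_subset_left, hcard b hb⟩
        · exact h.eq_of_subset (inter_subset_left.trans hPv) (hcard b hb) (mem_filter.1 hb).1
            (mem_filter.1 hc).1 inter_subset_right (hbc.trans_subset inter_subset_right)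
    _ = t + 1 := by rw [card_powersetCard, hPt, Nat.choose_succ_self_right]

theorem four_mul_sum_blockOutDegree (h : IsSteiner v 2 3 𝔅) :
    4 * ∑ P ∈ (range v).powersetCard 3, (blockOutDegree v 3 𝔅 P : ℤ) = v * (v - 1) * (v - 3) := by
  have hpair : ∀ z ∈ ascPairs v, 2 * (#{b ∈ 𝔅 | z.1 ∈ b ∧ z.2 ∉ b} : ℤ) = v - 3 := fun z hz =>
    have hz := mem_ascPairs.1 hz
    h.two_mul_card_filter_mem_notMem hz.1.ne (hz.1.trans hz.2) hz.2
  rw [← Nat.cast_sum, sum_blockOutDegree fun b hb => IsDesign.mem_powersetCard_range h hb,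
    Nat.cast_sum, show (4 : ℤ) = 2 * 2 by norm_num, mul_assoc, mul_sum, sum_congr rfl hpair,
    sum_const, nsmul_eq_mul, ← mul_assoc, two_mul_card_ascPairs]

theorem six_mul_card_sdiff (h : IsSteiner v 2 3 𝔅) :
    6 * (#((range v).powersetCard 3 \ 𝔅) : ℤ) = v * (v - 1) * (v - 3) := by
  rw [card_sdiff_of_subset fun b hb => IsDesign.mem_powersetCard_range h hb,
    Nat.cast_sub (card_le_card fun b hb => IsDesign.mem_powersetCard_range h hb), mul_sub,
    h.six_mul_card, card_powersetCard, card_range, six_mul_cast_choose_three]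
  ring

end IsSteiner

theorem aCount_eq_card (v k : ℕ) (𝔅 : Finset (Finset ℕ)) (i : ℕ) :
    aCount v k 𝔅 i = #{P ∈ (range v).powersetCard k \ 𝔅 | blockOutDegree v k 𝔅 P = i} := by
  rw [aCount, ← Set.ncard_coe_finset]
  congr 1
  ext P
  simp [welterVertex, blockOutDegree, ← Set.ncard_coe_finset, mem_powersetCard, and_assoc]

theorem ICount_eq_card (v : ℕ) (B C : Finset ℕ) :
    ICount v B C = #{P ∈ (range v).powersetCard 3 | welterRel v 3 P B ∧ welterRel v 3 P C} := by
  rw [ICount, ← Set.ncard_coe_finset]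
  congr 1
  ext P
  simp only [Set.mem_ofPred_eq, coe_filter]
  exact ⟨fun hP => ⟨mem_powersetCard.2 hP.1.1, hP⟩, fun hP => hP.2⟩

theorem sum_offDiag_ICount (v : ℕ) (𝔅 : Finset (Finset ℕ)) :
    ∑ z ∈ 𝔅.offDiag, (ICount v z.1 z.2 : ℤ)
      = ∑ P ∈ (range v).powersetCard 3, ((blockOutDegree v 3 𝔅 P : ℤ) * blockOutDegree v 3 𝔅 P
          - blockOutDegree v 3 𝔅 P) := by
  rw [← Nat.cast_sum, sum_congr rfl fun z _ => ICount_eq_card v z.1 z.2,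
    sum_card_offDiag_filter, Nat.cast_sum]
  refine sum_congr rfl fun P _ => ?_
  rw [offDiag_card, Nat.cast_sub (Nat.le_mul_self _), Nat.cast_mul]
  rfl

theorem two_mul_ite_eq_zero_add_ite_eq_three {d : ℕ} (hd : d ≤ 3) :
    2 * ((if d = 0 then 1 else 0) + (if d = 3 then 1 else 0) : ℤ) = (d - 1) * (d - 2) := by
  interval_cases d <;> rfl

theorem IsSteiner.two_mul_aCount_zero_add_aCount_three {v : ℕ} {𝔅 : Finset (Finset ℕ)}
    (h : IsSteiner v 2 3 𝔅) :
    2 * ((aCount v 3 𝔅 0 : ℤ) + aCount v 3 𝔅 3) = ∑ P ∈ (range v).powersetCard 3 \ 𝔅,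
      ((blockOutDegree v 3 𝔅 P : ℤ) - 1) * (blockOutDegree v 3 𝔅 P - 2) := by
  rw [aCount_eq_card, aCount_eq_card, card_filter, card_filter]
  push_cast
  rw [← sum_add_distrib, mul_sum]
  exact sum_congr rfl fun P hP =>
    two_mul_ite_eq_zero_add_ite_eq_three (h.blockOutDegree_le (t := 2) (sdiff_subset hP))

/-- Stated over `ℤ` and multiplied by 12; the sum over unordered pairs of blocks is half the
sum over ordered pairs of distinct blocks. -/
theorem stmt_15_general (v : ℕ) (𝔅 : Finset (Finset ℕ))
    (h : IsSteiner v 2 3 𝔅) :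
    12 * ((aCount v 3 𝔅 0 : ℤ) + (aCount v 3 𝔅 3 : ℤ))
        + (v : ℤ) * ((v : ℤ) - 1) * ((v : ℤ) - 3)
      = 6 * ∑ p ∈ 𝔅.offDiag, (ICount v p.1 p.2 : ℤ) := by
  set V := (range v).powersetCard 3
  set d := blockOutDegree v 3 𝔅
  have hvanish : ∀ f : ℕ → ℤ, f 0 = 0 → ∑ P ∈ V \ 𝔅, f (d P) = ∑ P ∈ V, f (d P) :=
    fun f hf => sum_subset sdiff_subset fun P hP hP' => by
      have hdP : d P = 0 := h.blockOutDegree_eq_zero (t := 2) (by simpa [hP] using hP')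
      rw [hdP, hf]
  have hE := h.four_mul_sum_blockOutDegree
  rw [← hvanish (↑) rfl] at hE
  rw [sum_offDiag_ICount, ← hvanish (fun n => n * n - n) (by simp),
    show (12 : ℤ) = 6 * 2 by norm_num, mul_assoc, h.two_mul_aCount_zero_add_aCount_three, mul_sum]
  have hN := h.six_mul_card_sdiff
  simp only [show ∀ x : ℤ, 6 * ((x - 1) * (x - 2)) = 6 * (x * x - x) - 12 * x + 12 by
    intro x; ring, sum_add_distrib, sum_sub_distrib, ← mul_sum, sum_const, nsmul_eq_mul]
  linarith

/-- For a Steiner triple system `S(2, 3, v)`: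
`a₀(D) + a₃(D) = Σ_{{B,C} ∈ C(𝔅,2)} I(B, C) - v(v-1)(v-3)/12`. Stated over `ℤ`,
multiplied through by 12, with the sum over unordered pairs written as half the sum
over ordered pairs of distinct blocks (so `12 · Σ_unordered = 6 · Σ_offDiag`). -/
theorem stmt_15 (v : ℕ) (𝔅 : Finset (Finset ℕ)) (hv : 3 ≤ v)
    (h : IsSteiner v 2 3 𝔅) :
    12 * ((aCount v 3 𝔅 0 : ℤ) + (aCount v 3 𝔅 3 : ℤ))
        + (v : ℤ) * ((v : ℤ) - 1) * ((v : ℤ) - 3)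
      = 6 * ∑ p ∈ 𝔅.offDiag, (ICount v p.1 p.2 : ℤ) :=
  stmt_15_general v 𝔅 h
end
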